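/- Let σ ≥ −1, T > 0 and let A, B : [0,T] × ℝ² → ℂ be measurable with sup_{0≤t≤T} ‖A(t)‖_{X⁰}, sup_{0≤t≤T} ‖B(t)‖_{X⁰}, ∫₀^T ‖A(t)‖_{X^{σ+1}} dt and ∫₀^T ‖B(t)‖_{X^{σ+1}} dt all finite. Define Q(t,ξ) := ∫₀^t e^{−(t−z)|ξ|} N[A,B](z,ξ) dz. Then ∫₀^T ∫_{ℝ²} |ξ|^{σ+1} |Q(t,ξ)| dξ dt ≤ 2^{σ+1} [ (sup_{0≤t≤T} ‖A(t)‖_{X⁰}) ∫₀^T ‖B(t)‖_{X^{σ+1}} dt + (∫₀^T ‖A(t)‖_{X^{σ+1}} dt)(sup_{0≤t≤T} ‖B(t)‖_{X⁰}) ]. -/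

import Mathlib

open MeasureTheory Filter
open scoped ENNReal NNReal

noncomputable section

abbrev E2 : Type := EuclideanSpace ℝ (Fin 2)

/-- `X^σ`-type norm of a time slice: `∫ |ξ|^σ |Θ(t,ξ)| dξ` (valued in `ℝ≥0∞`). -/
def Xnorm (σ : ℝ) (g : E2 → ℂ) : ℝ≥0∞ :=
  ∫⁻ ξ : E2, ENNReal.ofReal (‖ξ‖ ^ σ) * ‖g ξ‖₊

/-- Bilinear quasi-geostrophic term `N[A,B]` on the Fourier side:
the Fourier transform of `-div(b u_a)`. -/
def QGB (A B : ℝ → E2 → ℂ) (z : ℝ) (ξ : E2) : ℂ :=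
  ∫ η : E2, (((ξ 0 * η 1 - ξ 1 * η 0) / ‖η‖ : ℝ) : ℂ) * A z η * B z (ξ - η)

/-! The symbol of `N` is bounded by `|ξ|`, and `|ξ| ≤ |η| + |ξ - η|` gives
`|ξ|^{σ+1} ≤ 2^{σ+1} (|η|^{σ+1} + |ξ - η|^{σ+1})`. Hence `|ξ|^{σ+1} |N[A,B](z,ξ)|` is at most
`2^{σ+1} |ξ|` times the sum of two convolutions of `|A(z)|` and `|B(z)|`, one factor of each carrying
the weight `|·|^{σ+1}`. The surplus factor `|ξ|` is absorbed by the dissipation: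
`∫_z^∞ |ξ| e^{-(t-z)|ξ|} dt ≤ 1`. After Tonelli, the time integral of the Duhamel term is thus bounded
by `∫_0^T` of the `L¹` norms of these convolutions, i.e. of
`‖A(z)‖_{X^{σ+1}} ‖B(z)‖_{X^0} + ‖A(z)‖_{X^0} ‖B(z)‖_{X^{σ+1}}`; it remains to bound the `X^0` factors
by their suprema. -/

open Set Function

theorem MeasureTheory.lintegral_lconvolution {G : Type*} [MeasurableSpace G] [AddGroup G]
    [MeasurableAdd₂ G] [MeasurableNeg G] {μ : Measure G} [μ.IsAddLeftInvariant] [SFinite μ]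
    {f g : G → ℝ≥0∞} (hf : Measurable f) (hg : Measurable g) :
    ∫⁻ x, (f ⋆ₗ[μ] g) x ∂μ = (∫⁻ x, f x ∂μ) * ∫⁻ x, g x ∂μ := by
  unfold lconvolution
  rw [lintegral_lintegral_swap (by fun_prop)]
  have translate (y : G) : ∫⁻ x, f y * g (-y + x) ∂μ = f y * ∫⁻ x, g x ∂μ := by
    rw [lintegral_const_mul _ (by fun_prop), lintegral_add_left_eq_self]
  rw [lintegral_congr translate, lintegral_mul_const _ hf]

theorem Real.rpow_le_two_rpow_mul_add {a b c s : ℝ} (ha : 0 ≤ a) (hb : 0 ≤ b) (hc : 0 ≤ c)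
    (hs : 0 ≤ s) (habc : c ≤ a + b) : c ^ s ≤ 2 ^ s * (a ^ s + b ^ s) := by
  have hmax : c ≤ 2 * max a b := by linarith [le_max_left a b, le_max_right a b]
  calc c ^ s ≤ (2 * max a b) ^ s := Real.rpow_le_rpow hc hmax hs
    _ = 2 ^ s * max a b ^ s := Real.mul_rpow zero_le_two (le_max_of_le_left ha)
    _ ≤ 2 ^ s * (a ^ s + b ^ s) := by
      gcongr
      rcases max_cases a b with ⟨h, -⟩ | ⟨h, -⟩ <;> rw [h]
      · linarith [Real.rpow_nonneg hb s]
      · linarith [Real.rpow_nonneg ha s]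

theorem norm_rpow_le_two_rpow_mul_add {E : Type*} [SeminormedAddCommGroup E] {s : ℝ} (hs : 0 ≤ s)
    (ξ η : E) : ‖ξ‖ ^ s ≤ 2 ^ s * (‖η‖ ^ s + ‖ξ - η‖ ^ s) :=
  Real.rpow_le_two_rpow_mul_add (norm_nonneg _) (norm_nonneg _) (norm_nonneg _) hs
    (norm_le_insert' ξ η)

theorem lintegral_Ici_ofReal_mul_exp_le_one (z : ℝ) {c : ℝ} (hc : 0 ≤ c) :
    ∫⁻ t in Ici z, ENNReal.ofReal (c * Real.exp (-((t - z) * c))) ≤ 1 := by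
  rcases hc.eq_or_lt with rfl | hc
  · simp
  calc ∫⁻ t in Ici z, ENNReal.ofReal (c * Real.exp (-((t - z) * c)))
      = ∫⁻ t in Ici z, ProbabilityTheory.exponentialPDF c (t - z) := by
        refine setLIntegral_congr_fun measurableSet_Ici fun t ht => ?_
        rw [ProbabilityTheory.exponentialPDF_eq, if_pos (sub_nonneg.mpr ht), mul_comm (t - z)]
    _ ≤ ∫⁻ t, ProbabilityTheory.exponentialPDF c (t - z) := setLIntegral_le_lintegral _ _
    _ = 1 := by
      rw [lintegral_sub_right_eq_self (ProbabilityTheory.exponentialPDF c),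
        ProbabilityTheory.lintegral_exponentialPDF_eq_one hc]

theorem lintegral_Icc_lintegral_Ioc_le_lintegral_Ici {F : ℝ → ℝ → ℝ≥0∞}
    (hF : Measurable (uncurry F)) (T : ℝ) :
    ∫⁻ t in Icc 0 T, ∫⁻ z in Ioc 0 t, F t z ≤ ∫⁻ z in Icc 0 T, ∫⁻ t in Ici z, F t z := by
  let G : ℝ → ℝ → ℝ≥0∞ := fun t z => (Ici z).indicator (F · z) t
  have hG : Measurable (uncurry G) :=
    Measurable.ite (measurableSet_le measurable_snd measurable_fst) hF measurable_const
  calc ∫⁻ t in Icc 0 T, ∫⁻ z in Ioc 0 t, F t z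
      ≤ ∫⁻ t in Icc 0 T, ∫⁻ z in Icc 0 T, G t z := by
        refine setLIntegral_mono' measurableSet_Icc fun t ht => ?_
        calc ∫⁻ z in Ioc 0 t, F t z = ∫⁻ z in Ioc 0 t, G t z :=
              setLIntegral_congr_fun measurableSet_Ioc fun z hz => by
                simp [G, indicator_of_mem (mem_Ici.mpr hz.2)]
          _ ≤ ∫⁻ z in Icc 0 T, G t z :=
              lintegral_mono_set (Ioc_subset_Icc_self.trans (Icc_subset_Icc_right ht.2))
    _ = ∫⁻ z in Icc 0 T, ∫⁻ t in Icc 0 T, G t z := lintegral_lintegral_swap hG.aemeasurable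
    _ ≤ ∫⁻ z in Icc 0 T, ∫⁻ t in Ici z, F t z := lintegral_mono fun z =>
        (setLIntegral_le_lintegral _ _).trans_eq (lintegral_indicator measurableSet_Ici _)

theorem lintegral_Icc_lintegral_duhamel_le {E : Type*} [MeasurableSpace E] {μ : Measure E}
    [SFinite μ] {c : E → ℝ} (hc : Measurable c) (hc0 : ∀ ξ, 0 ≤ c ξ) {k : ℝ → E → ℝ≥0∞}
    (hk : Measurable (uncurry k)) (T : ℝ) :
    ∫⁻ t in Icc 0 T, ∫⁻ ξ, (∫⁻ z in Ioc 0 t,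
        ENNReal.ofReal (c ξ * Real.exp (-((t - z) * c ξ))) * k z ξ) ∂μ
      ≤ ∫⁻ z in Icc 0 T, ∫⁻ ξ, k z ξ ∂μ := by
  let e : ℝ → ℝ → E → ℝ≥0∞ := fun t z ξ => ENNReal.ofReal (c ξ * Real.exp (-((t - z) * c ξ)))
  have he : Measurable fun p : (ℝ × ℝ) × E => e p.1.1 p.1.2 p.2 := by fun_prop
  have hek : Measurable fun p : (ℝ × ℝ) × E => e p.1.1 p.1.2 p.2 * k p.1.2 p.2 :=
    he.mul (hk.comp (measurable_fst.snd.prodMk measurable_snd))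
  calc ∫⁻ t in Icc 0 T, ∫⁻ ξ, (∫⁻ z in Ioc 0 t, e t z ξ * k z ξ) ∂μ
      = ∫⁻ t in Icc 0 T, ∫⁻ z in Ioc 0 t, ∫⁻ ξ, e t z ξ * k z ξ ∂μ :=
        lintegral_congr fun t => lintegral_lintegral_swap (by
          exact (hek.comp (by fun_prop : Measurable fun q : E × ℝ => ((t, q.2), q.1))).aemeasurable)
    _ ≤ ∫⁻ z in Icc 0 T, ∫⁻ t in Ici z, ∫⁻ ξ, e t z ξ * k z ξ ∂μ :=
        lintegral_Icc_lintegral_Ioc_le_lintegral_Ici (by exact hek.lintegral_prod_right') T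
    _ = ∫⁻ z in Icc 0 T, ∫⁻ ξ, (∫⁻ t in Ici z, e t z ξ) * k z ξ ∂μ := by
        refine lintegral_congr fun z => ?_
        rw [lintegral_lintegral_swap (by
          exact (hek.comp (by fun_prop : Measurable fun q : ℝ × E => ((q.1, z), q.2))).aemeasurable)]
        exact lintegral_congr fun ξ =>
          lintegral_mul_const _ (he.comp (by fun_prop : Measurable fun t : ℝ => ((t, z), ξ)))
    _ ≤ ∫⁻ z in Icc 0 T, ∫⁻ ξ, k z ξ ∂μ :=
        lintegral_mono fun z => lintegral_mono fun ξ =>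
          mul_le_of_le_one_left' (lintegral_Ici_ofReal_mul_exp_le_one z (hc0 ξ))

theorem setLIntegral_mul_add_mul_le {α : Type*} [MeasurableSpace α] {μ : Measure α} {s : Set α}
    (hs : MeasurableSet s) {f₀ f₁ g₀ g₁ : α → ℝ≥0∞} (hf₁ : Measurable f₁) (hg₁ : Measurable g₁) :
    ∫⁻ x in s, (f₁ x * g₀ x + f₀ x * g₁ x) ∂μ
      ≤ (⨆ x ∈ s, f₀ x) * (∫⁻ x in s, g₁ x ∂μ) + (∫⁻ x in s, f₁ x ∂μ) * ⨆ x ∈ s, g₀ x := by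
  calc ∫⁻ x in s, (f₁ x * g₀ x + f₀ x * g₁ x) ∂μ
      ≤ ∫⁻ x in s, (f₁ x * ⨆ y ∈ s, g₀ y) + (⨆ y ∈ s, f₀ y) * g₁ x ∂μ :=
        setLIntegral_mono' hs fun x hx => by gcongr <;> exact le_biSup _ hx
    _ = _ := by
        rw [lintegral_add_left (hf₁.mul_const _), lintegral_mul_const _ hf₁,
          lintegral_const_mul _ hg₁, add_comm]

theorem abs_cross_le_norm_mul_norm (ξ η : E2) : |ξ 0 * η 1 - ξ 1 * η 0| ≤ ‖ξ‖ * ‖η‖ := by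
  have hsq (x : E2) : ‖x‖ ^ 2 = x 0 ^ 2 + x 1 ^ 2 := by
    simp [EuclideanSpace.norm_sq_eq, Fin.sum_univ_two]
  refine abs_le_of_sq_le_sq ?_ (by positivity)
  -- Lagrange's identity: the defect is the square of the inner product.
  rw [mul_pow, hsq, hsq]
  nlinarith [sq_nonneg (ξ 0 * η 0 + ξ 1 * η 1)]

theorem ofReal_rpow_mul_enorm_qgSymbol_le {s : ℝ} (hs : 0 ≤ s) (ξ η : E2) :
    ENNReal.ofReal (‖ξ‖ ^ s) * ‖(((ξ 0 * η 1 - ξ 1 * η 0) / ‖η‖ : ℝ) : ℂ)‖ₑ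
      ≤ ENNReal.ofReal ‖ξ‖ * 2 ^ s * (ENNReal.ofReal (‖η‖ ^ s) + ENNReal.ofReal (‖ξ - η‖ ^ s)) := by
  have hsymbol : |(ξ 0 * η 1 - ξ 1 * η 0) / ‖η‖| ≤ ‖ξ‖ := by
    rw [abs_div, abs_norm]
    rcases (norm_nonneg η).eq_or_lt with hη | hη
    · simp [← hη]
    · exact div_le_of_le_mul₀ hη.le (norm_nonneg ξ) (abs_cross_le_norm_mul_norm ξ η)
  have htwo : (2 : ℝ≥0∞) ^ s = ENNReal.ofReal (2 ^ s) := by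
    rw [← ENNReal.ofReal_rpow_of_pos zero_lt_two, ENNReal.ofReal_ofNat]
  rw [← ofReal_norm, Complex.norm_real, Real.norm_eq_abs, htwo,
    ← ENNReal.ofReal_mul (by positivity), ← ENNReal.ofReal_mul (norm_nonneg ξ),
    ← ENNReal.ofReal_add (by positivity) (by positivity),
    ← ENNReal.ofReal_mul (by positivity)]
  refine ENNReal.ofReal_le_ofReal ?_
  calc ‖ξ‖ ^ s * |(ξ 0 * η 1 - ξ 1 * η 0) / ‖η‖| ≤ ‖ξ‖ ^ s * ‖ξ‖ := by gcongr
    _ ≤ 2 ^ s * (‖η‖ ^ s + ‖ξ - η‖ ^ s) * ‖ξ‖ := by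
        gcongr
        exact norm_rpow_le_two_rpow_mul_add hs ξ η
    _ = ‖ξ‖ * 2 ^ s * (‖η‖ ^ s + ‖ξ - η‖ ^ s) := by ring

def xDensity (σ : ℝ) (g : E2 → ℂ) (ξ : E2) : ℝ≥0∞ :=
  ENNReal.ofReal (‖ξ‖ ^ σ) * ‖g ξ‖ₑ

theorem xDensity_zero (g : E2 → ℂ) (ξ : E2) : xDensity 0 g ξ = ‖g ξ‖ₑ := by
  simp [xDensity]

theorem Measurable.xDensity {g : E2 → ℂ} (hg : Measurable g) (σ : ℝ) :
    Measurable (xDensity σ g) :=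
  (measurable_norm.pow_const σ).ennreal_ofReal.mul hg.enorm

theorem measurable_xDensity {A : ℝ → E2 → ℂ} (hA : Measurable (uncurry A)) (σ : ℝ) :
    Measurable fun p : ℝ × E2 => xDensity σ (A p.1) p.2 := by
  unfold xDensity
  fun_prop

theorem measurable_Xnorm {A : ℝ → E2 → ℂ} (hA : Measurable (uncurry A)) (σ : ℝ) :
    Measurable fun z => Xnorm σ (A z) :=
  (measurable_xDensity hA σ).lintegral_prod_right'

/-- `ξ ↦ ∫ (|η|^s + |ξ - η|^s) |A(z,η)| |B(z,ξ-η)| dη`. -/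
def qgMajorant (s : ℝ) (A B : ℝ → E2 → ℂ) (z : ℝ) : E2 → ℝ≥0∞ :=
  xDensity s (A z) ⋆ₗ xDensity 0 (B z) + xDensity 0 (A z) ⋆ₗ xDensity s (B z)

section Majorant

variable {s : ℝ} {A B : ℝ → E2 → ℂ}

theorem measurable_qgMajorant (hA : Measurable (uncurry A)) (hB : Measurable (uncurry B)) :
    Measurable (uncurry (qgMajorant s A B)) := by
  have hconv (σ τ : ℝ) :
      Measurable fun p : ℝ × E2 => (xDensity σ (A p.1) ⋆ₗ xDensity τ (B p.1)) p.2 := by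
    simp only [lconvolution_def]
    exact Measurable.lintegral_prod_right'
      (((measurable_xDensity hA σ).comp (measurable_fst.fst.prodMk measurable_snd)).mul
        ((measurable_xDensity hB τ).comp
          (measurable_fst.fst.prodMk (measurable_snd.neg.add measurable_fst.snd))))
  simp only [uncurry_def, qgMajorant, Pi.add_apply]
  exact (hconv s 0).add (hconv 0 s)

theorem lintegral_qgMajorant (z : ℝ) (hA : Measurable (A z)) (hB : Measurable (B z)) :
    ∫⁻ ξ, qgMajorant s A B z ξ
      = Xnorm s (A z) * Xnorm 0 (B z) + Xnorm 0 (A z) * Xnorm s (B z) := by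
  simp only [qgMajorant, Pi.add_apply]
  rw [lintegral_add_left (measurable_lconvolution _ (hA.xDensity s) (hB.xDensity 0)),
    lintegral_lconvolution (hA.xDensity s) (hB.xDensity 0),
    lintegral_lconvolution (hA.xDensity 0) (hB.xDensity s)]
  rfl

theorem ofReal_rpow_mul_enorm_QGB_le (hs : 0 ≤ s) (z : ℝ) (hA : Measurable (A z))
    (hB : Measurable (B z)) (ξ : E2) :
    ENNReal.ofReal (‖ξ‖ ^ s) * ‖QGB A B z ξ‖ₑ
      ≤ ENNReal.ofReal ‖ξ‖ * 2 ^ s * qgMajorant s A B z ξ := by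
  have hC : ENNReal.ofReal ‖ξ‖ * 2 ^ s ≠ ⊤ :=
    ENNReal.mul_ne_top ENNReal.ofReal_ne_top (ENNReal.rpow_ne_top_of_nonneg hs (by norm_num))
  calc ENNReal.ofReal (‖ξ‖ ^ s) * ‖QGB A B z ξ‖ₑ
      ≤ ENNReal.ofReal (‖ξ‖ ^ s) * ∫⁻ η, ‖(((ξ 0 * η 1 - ξ 1 * η 0) / ‖η‖ : ℝ) : ℂ)‖ₑ *
          (‖A z η‖ₑ * ‖B z (ξ - η)‖ₑ) := by
        gcongr
        exact (enorm_integral_le_lintegral_enorm _).trans_eq (by simp only [enorm_mul, mul_assoc])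
    _ ≤ ∫⁻ η, ENNReal.ofReal ‖ξ‖ * 2 ^ s *
          ((ENNReal.ofReal (‖η‖ ^ s) + ENNReal.ofReal (‖ξ - η‖ ^ s)) *
            (‖A z η‖ₑ * ‖B z (ξ - η)‖ₑ)) := by
        rw [← lintegral_const_mul' _ _ ENNReal.ofReal_ne_top]
        refine lintegral_mono fun η => ?_
        rw [← mul_assoc, ← mul_assoc (ENNReal.ofReal ‖ξ‖ * 2 ^ s)]
        exact mul_le_mul_left (ofReal_rpow_mul_enorm_qgSymbol_le hs ξ η) _
    _ = ENNReal.ofReal ‖ξ‖ * 2 ^ s * qgMajorant s A B z ξ := by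
        rw [lintegral_const_mul' _ _ hC]
        simp only [qgMajorant, Pi.add_apply, lconvolution_def, neg_add_eq_sub, xDensity_zero]
        rw [← lintegral_add_left (by exact (hA.xDensity s).mul (hB.comp (measurable_const_sub ξ)).enorm)]
        congr 2 with η
        simp only [xDensity]
        ring

theorem ofReal_rpow_mul_enorm_duhamel_le (hs : 0 ≤ s) (hA : ∀ z, Measurable (A z))
    (hB : ∀ z, Measurable (B z)) {t : ℝ} (ht : 0 ≤ t) (ξ : E2) :
    ENNReal.ofReal (‖ξ‖ ^ s) *
        ‖∫ z in (0 : ℝ)..t, ((Real.exp (-((t - z) * ‖ξ‖)) : ℝ) : ℂ) * QGB A B z ξ‖ₑ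
      ≤ ∫⁻ z in Ioc 0 t, ENNReal.ofReal (‖ξ‖ * Real.exp (-((t - z) * ‖ξ‖))) *
          (2 ^ s * qgMajorant s A B z ξ) := by
  rw [intervalIntegral.integral_of_le ht]
  refine (mul_le_mul_right (enorm_integral_le_lintegral_enorm _) _).trans ?_
  rw [← lintegral_const_mul' _ _ ENNReal.ofReal_ne_top]
  refine lintegral_mono fun z => ?_
  rw [enorm_mul, ← ofReal_norm, Complex.norm_real, Real.norm_of_nonneg (Real.exp_nonneg _),
    ENNReal.ofReal_mul (norm_nonneg ξ), mul_left_comm]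
  calc ENNReal.ofReal (Real.exp (-((t - z) * ‖ξ‖))) * (ENNReal.ofReal (‖ξ‖ ^ s) * ‖QGB A B z ξ‖ₑ)
      ≤ ENNReal.ofReal (Real.exp (-((t - z) * ‖ξ‖))) *
          (ENNReal.ofReal ‖ξ‖ * 2 ^ s * qgMajorant s A B z ξ) :=
        mul_le_mul_right (ofReal_rpow_mul_enorm_QGB_le hs z (hA z) (hB z) ξ) _
    _ = _ := by ring

end Majorant

theorem bilinear_duhamel_int_bound_general (σ : ℝ) (hσ : -1 ≤ σ) (T : ℝ)
    (A B : ℝ → E2 → ℂ)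
    (hA : Measurable (Function.uncurry A)) (hB : Measurable (Function.uncurry B)) :
    (∫⁻ t in Set.Icc (0:ℝ) T, ∫⁻ ξ : E2, ENNReal.ofReal (‖ξ‖ ^ (σ + 1)) *
        ‖∫ z in (0:ℝ)..t, ((Real.exp (-((t - z) * ‖ξ‖)) : ℝ) : ℂ) * QGB A B z ξ‖₊)
      ≤ (2 : ℝ≥0∞) ^ (σ + 1) *
        ((⨆ t ∈ Set.Icc (0:ℝ) T, Xnorm 0 (A t)) *
            (∫⁻ t in Set.Icc (0:ℝ) T, Xnorm (σ + 1) (B t)) +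
          (∫⁻ t in Set.Icc (0:ℝ) T, Xnorm (σ + 1) (A t)) *
            (⨆ t ∈ Set.Icc (0:ℝ) T, Xnorm 0 (B t))) := by
  have hs : 0 ≤ σ + 1 := by linarith
  have hAz (z : ℝ) : Measurable (A z) := hA.comp measurable_prodMk_left
  have hBz (z : ℝ) : Measurable (B z) := hB.comp measurable_prodMk_left
  calc _ ≤ ∫⁻ t in Icc 0 T, ∫⁻ ξ, (∫⁻ z in Ioc 0 t,
          ENNReal.ofReal (‖ξ‖ * Real.exp (-((t - z) * ‖ξ‖))) *
            (2 ^ (σ + 1) * qgMajorant (σ + 1) A B z ξ)) :=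
        setLIntegral_mono' measurableSet_Icc fun t ht => lintegral_mono fun ξ =>
          ofReal_rpow_mul_enorm_duhamel_le hs hAz hBz ht.1 ξ
    _ ≤ ∫⁻ z in Icc 0 T, ∫⁻ ξ, 2 ^ (σ + 1) * qgMajorant (σ + 1) A B z ξ :=
        lintegral_Icc_lintegral_duhamel_le measurable_norm (fun ξ => norm_nonneg ξ)
          ((measurable_qgMajorant hA hB).const_mul _) T
    _ = 2 ^ (σ + 1) * ∫⁻ z in Icc 0 T,
          (Xnorm (σ + 1) (A z) * Xnorm 0 (B z) + Xnorm 0 (A z) * Xnorm (σ + 1) (B z)) := by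
        have h2 : (2 : ℝ≥0∞) ^ (σ + 1) ≠ ⊤ := ENNReal.rpow_ne_top_of_nonneg hs (by norm_num)
        simp_rw [lintegral_const_mul' _ _ h2, lintegral_qgMajorant _ (hAz _) (hBz _)]
    _ ≤ _ := mul_le_mul_right (setLIntegral_mul_add_mul_le measurableSet_Icc
          (measurable_Xnorm hA _) (measurable_Xnorm hB _)) _

/-- Lemma 2.7, `L¹_T(X^{σ+1})` part: bound for the bilinear Duhamel term
`Q(t,ξ) = ∫₀^t e^{-(t-z)|ξ|} N[A,B](z,ξ) dz`. -/
theorem bilinear_duhamel_int_bound (σ : ℝ) (hσ : -1 ≤ σ) (T : ℝ) (hT : 0 < T)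
    (A B : ℝ → E2 → ℂ)
    (hA : Measurable (Function.uncurry A)) (hB : Measurable (Function.uncurry B))
    (hA0 : (⨆ t ∈ Set.Icc (0:ℝ) T, Xnorm 0 (A t)) < ⊤)
    (hB0 : (⨆ t ∈ Set.Icc (0:ℝ) T, Xnorm 0 (B t)) < ⊤)
    (hA1 : (∫⁻ t in Set.Icc (0:ℝ) T, Xnorm (σ + 1) (A t)) < ⊤)
    (hB1 : (∫⁻ t in Set.Icc (0:ℝ) T, Xnorm (σ + 1) (B t)) < ⊤) :
    (∫⁻ t in Set.Icc (0:ℝ) T, ∫⁻ ξ : E2, ENNReal.ofReal (‖ξ‖ ^ (σ + 1)) *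
        ‖∫ z in (0:ℝ)..t, ((Real.exp (-((t - z) * ‖ξ‖)) : ℝ) : ℂ) * QGB A B z ξ‖₊)
      ≤ (2 : ℝ≥0∞) ^ (σ + 1) *
        ((⨆ t ∈ Set.Icc (0:ℝ) T, Xnorm 0 (A t)) *
            (∫⁻ t in Set.Icc (0:ℝ) T, Xnorm (σ + 1) (B t)) +
          (∫⁻ t in Set.Icc (0:ℝ) T, Xnorm (σ + 1) (A t)) *
            (⨆ t ∈ Set.Icc (0:ℝ) T, Xnorm 0 (B t))) :=
  bilinear_duhamel_int_bound_general σ hσ T A B hA hB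

end
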